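/- arXiv:1801.04820 — 2 statements merged into one kernel-verified Lean document; each statement's English description precedes it below -/
import Mathlib

section
/- Let R be a commutative ring and S ⊆ R a multiplicative subset. The following are equivalent: (1) R is S-h-local; (2) every S-torsion R-module M is isomorphic to the direct sum ⊕_{𝔪 ∈ Max R} M_𝔪 of its localizations at all maximal ideals of R; (3) every S-torsion R-module M is isomorphic to the direct sum ⊕ M_𝔪 over the maximal ideals 𝔪 of R with 𝔪 ∩ S ≠ ∅. -/
open CategoryTheory

noncomputable section

/-- `Ext^n_R(M, N) = 0`, using the `Ext` functor on `ModuleCat R`. -/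
def ExtVanishes (R : Type) [CommRing R] (M N : Type) [AddCommGroup M] [Module R M]
    [AddCommGroup N] [Module R N] (n : ℕ) : Prop :=
  Subsingleton (((Ext R (ModuleCat R) n).obj (Opposite.op (ModuleCat.of R M))).obj
    (ModuleCat.of R N))

/-- An `R`-module `C` is `S`-weakly cotorsion if `Ext¹_R(R_S, C) = 0`. -/
def IsSWeaklyCotorsion (R : Type) [CommRing R] (S : Submonoid R) (C : Type)
    [AddCommGroup C] [Module R C] : Prop :=
  ExtVanishes R (Localization S) C 1

/-- An `R`-module `F` is `S`-strongly flat if `Ext¹_R(F, C) = 0` for all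
`S`-weakly cotorsion `R`-modules `C`. -/
def IsSStronglyFlat (R : Type) [CommRing R] (S : Submonoid R) (F : Type)
    [AddCommGroup F] [Module R F] : Prop :=
  ∀ (C : Type) [AddCommGroup C] [Module R C],
    IsSWeaklyCotorsion R S C → ExtVanishes R F C 1

/-- An `R`-module `M` is Enochs cotorsion if `Ext¹_R(F, M) = 0` for all flat `F`. -/
def IsEnochsCotorsion (R : Type) [CommRing R] (M : Type) [AddCommGroup M] [Module R M] : Prop :=
  ∀ (F : Type) [AddCommGroup F] [Module R F],
    Module.Flat R F → ExtVanishes R F M 1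

/-- A commutative ring is perfect if every flat module over it is projective. -/
def IsPerfectRing (A : Type) [CommRing A] : Prop :=
  ∀ (M : Type) [AddCommGroup M] [Module A M],
    Module.Flat A M → Module.Projective A M

/-- `R` is `S`-almost perfect if `R_S` is perfect and `R/sR` is perfect for every `s ∈ S`. -/
def IsSAlmostPerfect (R : Type) [CommRing R] (S : Submonoid R) : Prop :=
  IsPerfectRing (Localization S) ∧ ∀ s ∈ S, IsPerfectRing (R ⧸ Ideal.span {s})

/-- `R` is `S`-h-local: every `s ∈ S` lies in only finitely many maximal ideals and every
prime ideal intersecting `S` is contained in only one maximal ideal. -/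
def IsSHLocal (R : Type) [CommRing R] (S : Submonoid R) : Prop :=
  (∀ s ∈ S, {𝔪 : Ideal R | 𝔪.IsMaximal ∧ s ∈ 𝔪}.Finite) ∧
  (∀ 𝔭 : Ideal R, 𝔭.IsPrime → (∃ s ∈ S, s ∈ 𝔭) →
    ∀ 𝔪 𝔫 : Ideal R, 𝔪.IsMaximal → 𝔫.IsMaximal → 𝔭 ≤ 𝔪 → 𝔭 ≤ 𝔫 → 𝔪 = 𝔫)

/-- `R` is `S`-h-nil: every `s ∈ S` lies in only finitely many maximal ideals and every
prime ideal intersecting `S` is maximal. -/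
def IsSHNil (R : Type) [CommRing R] (S : Submonoid R) : Prop :=
  (∀ s ∈ S, {𝔪 : Ideal R | 𝔪.IsMaximal ∧ s ∈ 𝔪}.Finite) ∧
  (∀ 𝔭 : Ideal R, 𝔭.IsPrime → (∃ s ∈ S, s ∈ 𝔭) → 𝔭.IsMaximal)

/-- `R` is `S`-semiartinian: every nonzero quotient of `R` by an ideal intersecting `S`
contains a simple module. -/
def IsSSemiartinian (R : Type) [CommRing R] (S : Submonoid R) : Prop :=
  ∀ J : Ideal R, (∃ s ∈ S, s ∈ J) → J ≠ ⊤ →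
    ∃ N : Submodule R (R ⧸ J), IsSimpleModule R N

/-- The projective dimension of the `R`-module `M` is at most `n`. -/
def HasProjDimLE (R : Type) [CommRing R] :
    ℕ → (M : Type) → [AddCommGroup M] → [Module R M] → Prop
  | 0, M, _, _ => Module.Projective R M
  | (n+1), M, _, _ => ∃ (ι : Type) (f : (ι →₀ R) →ₗ[R] M),
      Function.Surjective f ∧ HasProjDimLE R n (LinearMap.ker f)

/-- The flat dimension of the `R`-module `M` is at most `n`. -/
def HasFlatDimLE (R : Type) [CommRing R] :
    ℕ → (M : Type) → [AddCommGroup M] → [Module R M] → Prop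
  | 0, M, _, _ => Module.Flat R M
  | (n+1), M, _, _ => ∃ (ι : Type) (f : (ι →₀ R) →ₗ[R] M),
      Function.Surjective f ∧ HasFlatDimLE R n (LinearMap.ker f)

/-- An `R`-module `D` is `S`-divisible if `sD = D` for every `s ∈ S`. -/
def IsSDivisible (R : Type) [CommRing R] (S : Submonoid R) (D : Type)
    [AddCommGroup D] [Module R D] : Prop :=
  ∀ s ∈ S, ∀ x : D, ∃ y : D, s • y = x

/-- An `R`-module `D` is `S`-h-divisible if it is an epimorphic image of a direct sum of
copies of `R_S`. -/
def IsSHDivisible (R : Type) [CommRing R] (S : Submonoid R) (D : Type)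
    [AddCommGroup D] [Module R D] : Prop :=
  ∃ (α : Type) (f : (α →₀ Localization S) →ₗ[R] D), Function.Surjective f

/-- An `R`-module `M` is `S`-torsion if every element is annihilated by some `s ∈ S`. -/
def IsSTorsion (R : Type) [CommRing R] (S : Submonoid R) (M : Type)
    [AddCommGroup M] [Module R M] : Prop :=
  ∀ x : M, ∃ s ∈ S, s • x = 0

/-- An `R`-module `M` is an `S`-contramodule if `Hom_R(R_S, M) = 0 = Ext¹_R(R_S, M)`. -/
def IsSContramodule (R : Type) [CommRing R] (S : Submonoid R) (M : Type)
    [AddCommGroup M] [Module R M] : Prop :=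
  (∀ f : Localization S →ₗ[R] M, f = 0) ∧ ExtVanishes R (Localization S) M 1

/-- An `R`-module `P` is a `t`-contramodule if
`Hom_R(R[t⁻¹], P) = 0 = Ext¹_R(R[t⁻¹], P)`. -/
def IsTContramodule (R : Type) [CommRing R] (t : R) (P : Type)
    [AddCommGroup P] [Module R P] : Prop :=
  IsSContramodule R (Submonoid.powers t) P

/-- An `R`-module `P` is an `𝔞`-contramodule if it is a `t`-contramodule for every `t ∈ 𝔞`. -/
def IsIdealContramodule (R : Type) [CommRing R] (𝔞 : Ideal R) (P : Type)
    [AddCommGroup P] [Module R P] : Prop :=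
  ∀ t ∈ 𝔞, IsTContramodule R t P

section SHLocalAux

open LocalizedModule

variable {R : Type} [CommRing R]

private lemma lm_mk_eq_zero_iff {M : Type} [AddCommGroup M] [Module R M] {S' : Submonoid R}
    (m : M) (t : S') :
    (LocalizedModule.mk m t : LocalizedModule S' M) = 0 ↔ ∃ u : S', (u : R) • m = 0 := by
  constructor
  · intro h
    rw [← LocalizedModule.zero_mk (1 : S'), LocalizedModule.mk_eq] at h
    obtain ⟨u, hu⟩ := h
    refine ⟨u, ?_⟩
    simpa [Submonoid.smul_def] using hu
  · rintro ⟨u, hu⟩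
    rw [← LocalizedModule.zero_mk (1 : S'), LocalizedModule.mk_eq]
    exact ⟨u, by simp [Submonoid.smul_def, hu]⟩

private lemma lm_smul_eq_zero {M : Type} [AddCommGroup M] [Module R M] {S' : Submonoid R}
    {u : R} (hu : u ∈ S') {z : LocalizedModule S' M} (h : u • z = 0) : z = 0 := by
  induction z using LocalizedModule.induction_on with
  | h m t =>
    rw [LocalizedModule.smul'_mk] at h
    obtain ⟨c, hc⟩ := (lm_mk_eq_zero_iff _ _).mp h
    refine (lm_mk_eq_zero_iff _ _).mpr ⟨c * ⟨u, hu⟩, ?_⟩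
    rw [Submonoid.coe_mul, mul_smul]
    exact hc

private def annOf (R : Type) [CommRing R] {M : Type} [AddCommGroup M] [Module R M] (y : M) : Ideal R :=
  LinearMap.ker (LinearMap.toSpanSingleton R M y)

private lemma mem_annOf {M : Type} [AddCommGroup M] [Module R M] {y : M} {r : R} :
    r ∈ annOf R y ↔ r • y = 0 := by
  simp [annOf, LinearMap.mem_ker, LinearMap.toSpanSingleton_apply]

private lemma exists_mul_pow_mem {A 𝔮 : Ideal R} (h𝔮 : 𝔮 ∈ A.minimalPrimes)
    {u : R} (hu : u ∈ 𝔮) : ∃ (n : ℕ) (w : R), w ∉ 𝔮 ∧ w * u ^ n ∈ A := by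
  haveI hP : 𝔮.IsPrime := h𝔮.1.1
  set f := algebraMap R (Localization 𝔮.primeCompl) with hf
  have hrad : f u ∈ (A.map f).radical := by
    rw [Ideal.radical_eq_sInf, Ideal.mem_sInf]
    rintro J ⟨hJle, hJp⟩
    have h1 : A ≤ J.comap f := fun a ha => hJle (Ideal.mem_map_of_mem _ ha)
    have h2 : J.comap f ≤ 𝔮 := by
      intro v hv
      by_contra hv𝔮
      exact hJp.ne_top (J.eq_top_of_isUnit_mem hv
        (IsLocalization.map_units (M := 𝔮.primeCompl) (Localization 𝔮.primeCompl) ⟨v, hv𝔮⟩))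
    haveI := hJp
    have h3 : 𝔮 ≤ J.comap f := h𝔮.2 ⟨Ideal.IsPrime.comap f, h1⟩ h2
    exact h3 hu
  obtain ⟨n, hn⟩ := Ideal.mem_radical_iff.mp hrad
  rw [← map_pow] at hn
  obtain ⟨⟨⟨a, haA⟩, v⟩, hav⟩ := (IsLocalization.mem_map_algebraMap_iff 𝔮.primeCompl _).mp hn
  rw [← map_mul] at hav
  obtain ⟨c, hc⟩ := (IsLocalization.eq_iff_exists 𝔮.primeCompl _).mp hav
  refine ⟨n, (c : R) * (v : R), fun hmem => ?_, ?_⟩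
  · rcases hP.mem_or_mem hmem with h | h
    · exact c.2 h
    · exact v.2 h
  · have hq : (c : R) * (v : R) * u ^ n = (c : R) * a := by linear_combination hc
    rw [hq]
    exact A.mul_mem_left _ haA

end SHLocalAux

section SHLocalMain

variable {R : Type} [CommRing R]

private lemma key_ann {S : Submonoid R}
    (hS2 : ∀ 𝔭 : Ideal R, 𝔭.IsPrime → (∃ s ∈ S, s ∈ 𝔭) →
      ∀ 𝔪 𝔫 : Ideal R, 𝔪.IsMaximal → 𝔫.IsMaximal → 𝔭 ≤ 𝔪 → 𝔭 ≤ 𝔫 → 𝔪 = 𝔫)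
    {M : Type} [AddCommGroup M] [Module R M] (hM : IsSTorsion R S M)
    (𝔪 : Ideal R) [𝔪.IsPrime] (h𝔪 : 𝔪.IsMaximal)
    (y : LocalizedModule 𝔪.primeCompl M)
    (𝔫 : Ideal R) (h𝔫 : 𝔫.IsMaximal) (hne : 𝔫 ≠ 𝔪) :
    ∃ u : R, u ∉ 𝔫 ∧ u • y = 0 := by
  have hsat : ∀ u : R, u ∉ 𝔪 → ∀ r : R, u * r ∈ annOf R y → r ∈ annOf R y := by
    intro u hu r h
    rw [mem_annOf, mul_smul] at h
    exact mem_annOf.mpr (lm_smul_eq_zero hu h)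
  obtain ⟨s, hsS, hsy⟩ : ∃ s ∈ S, s • y = 0 := by
    induction y using LocalizedModule.induction_on with
    | h m t =>
      obtain ⟨s, hsS, hsm⟩ := hM m
      exact ⟨s, hsS, by rw [LocalizedModule.smul'_mk, hsm, LocalizedModule.zero_mk]⟩
  by_contra hcon
  push_neg at hcon
  have hA𝔫 : annOf R y ≤ 𝔫 := by
    intro w hw
    by_contra hw𝔫
    exact hcon w hw𝔫 (mem_annOf.mp hw)
  haveI := h𝔫.isPrime
  obtain ⟨𝔮, h𝔮min, h𝔮𝔫⟩ := Ideal.exists_minimalPrimes_le hA𝔫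
  haveI hqp : 𝔮.IsPrime := h𝔮min.1.1
  have hs𝔮 : s ∈ 𝔮 := h𝔮min.1.2 (mem_annOf.mpr hsy)
  have h𝔮𝔪 : ¬𝔮 ≤ 𝔪 := fun hle => hne (hS2 𝔮 hqp ⟨s, hsS, hs𝔮⟩ 𝔫 𝔪 h𝔫 h𝔪 h𝔮𝔫 hle)
  obtain ⟨u, hu𝔮, hu𝔪⟩ : ∃ u ∈ 𝔮, u ∉ 𝔪 := by
    by_contra hcon2
    push_neg at hcon2
    exact h𝔮𝔪 fun x hx => hcon2 x hx
  obtain ⟨n, w, hw𝔮, hwA⟩ := exists_mul_pow_mem h𝔮min hu𝔮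
  have hun : u ^ n ∉ 𝔪 := fun h => hu𝔪 ((‹𝔪.IsPrime›).mem_of_pow_mem n h)
  have hwin : w ∈ annOf R y := hsat _ hun w (by rwa [mul_comm] at hwA)
  exact hw𝔮 (h𝔮min.1.2 hwin)

private lemma forward {S : Submonoid R} (hhl : IsSHLocal R S)
    (ι : Type) (e : ι → Ideal R) (hmax : ∀ i, (e i).IsMaximal)
    (hinj : Function.Injective e)
    (hcov : ∀ 𝔪 : Ideal R, 𝔪.IsMaximal → (∃ s ∈ S, s ∈ 𝔪) → ∃ i, e i = 𝔪)
    (M : Type) [AddCommGroup M] [Module R M] (hM : IsSTorsion R S M) :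
    Nonempty (M ≃ₗ[R] DirectSum ι (fun i =>
      haveI := (hmax i).isPrime; LocalizedModule (e i).primeCompl M)) := by
  classical
  letI : ∀ i, (e i).IsPrime := fun i => (hmax i).isPrime
  have hfin : ∀ x : M,
      {i : ι | (LocalizedModule.mk x 1 : LocalizedModule (e i).primeCompl M) ≠ 0}.Finite := by
    intro x
    obtain ⟨s, hsS, hsx⟩ := hM x
    apply Set.Finite.subset ((hhl.1 s hsS).preimage (Function.Injective.injOn hinj))
    intro i hi
    simp only [Set.mem_preimage, Set.mem_setOf_eq]
    refine ⟨hmax i, ?_⟩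
    by_contra hs
    exact hi ((lm_mk_eq_zero_iff x 1).mpr ⟨⟨s, hs⟩, hsx⟩)
  have hDex : ∀ x : M, ∃ z : DirectSum ι (fun i => LocalizedModule (e i).primeCompl M),
      ∀ i, z i = LocalizedModule.mk x 1 := by
    intro x
    refine ⟨DFinsupp.mk (hfin x).toFinset (fun i => LocalizedModule.mk x 1), fun i => ?_⟩
    rw [DFinsupp.mk_apply]
    split
    · rfl
    · next h =>
      symm
      by_contra h0
      exact h ((hfin x).mem_toFinset.mpr h0)
  choose D hD using hDex
  have hDadd : ∀ x y : M, D (x + y) = D x + D y := by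
    intro x y
    refine DFunLike.ext _ _ fun i => ?_
    rw [DirectSum.add_apply, hD, hD, hD]
    exact map_add (LocalizedModule.mkLinearMap (e i).primeCompl M) x y
  have hDsmul : ∀ (r : R) (x : M), D (r • x) = r • D x := by
    intro r x
    refine DFunLike.ext _ _ fun i => ?_
    rw [DFinsupp.smul_apply, hD, hD]
    exact map_smul (LocalizedModule.mkLinearMap (e i).primeCompl M) r x
  set θ : M →ₗ[R] DirectSum ι (fun i => LocalizedModule (e i).primeCompl M) :=
    { toFun := D
      map_add' := hDadd
      map_smul' := hDsmul } with hθ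
  have hD' : ∀ (x : M) (i : ι), (θ x) i = LocalizedModule.mk x 1 := fun x i => hD x i
  have hθinj : Function.Injective θ := by
    rw [injective_iff_map_eq_zero]
    intro x hx
    have hall : ∀ i, (LocalizedModule.mk x 1 : LocalizedModule (e i).primeCompl M) = 0 := by
      intro i
      rw [← hD' x i, hx]
      rfl
    have hA : annOf R x = ⊤ := by
      by_contra hA
      obtain ⟨𝔪, h𝔪, hle⟩ := Ideal.exists_le_maximal _ hA
      by_cases hmeet : ∃ s ∈ S, s ∈ 𝔪
      · obtain ⟨i, rfl⟩ := hcov 𝔪 h𝔪 hmeet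
        obtain ⟨u, hu⟩ := (lm_mk_eq_zero_iff x 1).mp (hall i)
        exact u.2 (hle (mem_annOf.mpr hu))
      · obtain ⟨s, hsS, hsx⟩ := hM x
        exact hmeet ⟨s, hsS, hle (mem_annOf.mpr hsx)⟩
    have h1 : (1 : R) ∈ annOf R x := by rw [hA]; trivial
    have := mem_annOf.mp h1
    rwa [one_smul] at this
  have hθsurj : Function.Surjective θ := by
    intro z
    induction z using DirectSum.induction_on with
    | zero => exact ⟨0, map_zero θ⟩
    | add u v hu hv =>
      obtain ⟨a, ha⟩ := hu
      obtain ⟨b, hb⟩ := hv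
      exact ⟨a + b, by rw [map_add, ha, hb]⟩
    | of i₀ ξ =>
      induction ξ using LocalizedModule.induction_on with
      | h m t =>
        obtain ⟨s, hsS, hsm⟩ := hM m
        by_cases hs0 : s ∈ e i₀
        case neg =>
          have h0 : (LocalizedModule.mk m t : LocalizedModule (e i₀).primeCompl M) = 0 :=
            (lm_mk_eq_zero_iff m t).mpr ⟨⟨s, hs0⟩, hsm⟩
          exact ⟨0, by rw [map_zero, h0, map_zero]⟩
        case pos =>
          set B : Ideal R :=
            annOf R (LocalizedModule.mk m t : LocalizedModule (e i₀).primeCompl M) with hBdef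
          set A : Ideal R → Ideal R := fun 𝔫 =>
            if h : 𝔫.IsMaximal then
              haveI := h.isPrime
              annOf R (LocalizedModule.mk m 1 : LocalizedModule 𝔫.primeCompl M)
            else ⊤ with hAdef
          set T : Finset (Ideal R) := ((hhl.1 s hsS).toFinset).erase (e i₀) with hTdef
          have hcomax : B ⊔ (Ideal.span {(t : R)} * ∏ 𝔫 ∈ T, A 𝔫) = ⊤ := by
            by_contra hne
            obtain ⟨𝔐, h𝔐, hle⟩ := Ideal.exists_le_maximal _ hne
            have hB𝔐 : B ≤ 𝔐 := le_trans le_sup_left hle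
            have h𝔐eq : 𝔐 = e i₀ := by
              by_contra hne'
              obtain ⟨u, hu𝔐, huy⟩ : ∃ u : R, u ∉ 𝔐 ∧
                  u • (LocalizedModule.mk m t : LocalizedModule (e i₀).primeCompl M) = 0 :=
                key_ann hhl.2 hM (e i₀) (hmax i₀) (LocalizedModule.mk m t) 𝔐 h𝔐 hne'
              exact hu𝔐 (hB𝔐 (mem_annOf.mpr huy))
            have hprod : Ideal.span {(t : R)} * ∏ 𝔫 ∈ T, A 𝔫 ≤ 𝔐 := le_trans le_sup_right hle
            rcases (Ideal.IsPrime.mul_le h𝔐.isPrime).mp hprod with hc | hc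
            · rw [h𝔐eq] at hc
              exact t.2 (hc (Ideal.subset_span rfl))
            · obtain ⟨𝔫, h𝔫T, h𝔫le⟩ := (Ideal.IsPrime.prod_le h𝔐.isPrime).mp hc
              rw [hTdef] at h𝔫T
              have h𝔫mem : 𝔫 ∈ {𝔪 : Ideal R | 𝔪.IsMaximal ∧ s ∈ 𝔪} :=
                (Set.Finite.mem_toFinset (hhl.1 s hsS)).mp (Finset.mem_of_mem_erase h𝔫T)
              simp only [Set.mem_setOf_eq] at h𝔫mem
              have h𝔫ne : 𝔫 ≠ e i₀ := Finset.ne_of_mem_erase h𝔫T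
              haveI := h𝔫mem.1.isPrime
              obtain ⟨u, hu, huy⟩ := key_ann hhl.2 hM 𝔫 h𝔫mem.1
                (LocalizedModule.mk m 1) (e i₀) (hmax i₀) (Ne.symm h𝔫ne)
              apply hu
              rw [h𝔐eq] at h𝔫le
              apply h𝔫le
              have : u ∈ A 𝔫 := by
                rw [hAdef]
                simp only [dif_pos h𝔫mem.1]
                exact mem_annOf.mpr huy
              exact this
          have h1mem : (1 : R) ∈ B ⊔ (Ideal.span {(t : R)} * ∏ 𝔫 ∈ T, A 𝔫) := by
            rw [hcomax]; trivial
          obtain ⟨b, hbB, c, hc, hbc⟩ := Submodule.mem_sup.mp h1mem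
          obtain ⟨a, haprod, hta⟩ := Ideal.mem_span_singleton_mul.mp hc
          have haA : ∀ 𝔫 ∈ T, a ∈ A 𝔫 := fun 𝔫 h𝔫 =>
            (le_trans Ideal.prod_le_inf (Finset.inf_le h𝔫)) haprod
          refine ⟨a • m, ?_⟩
          refine DFunLike.ext _ _ fun i => ?_
          rw [hD']
          by_cases hi : i = i₀
          · subst hi
            rw [DirectSum.of_eq_same]
            have h1 : ((t : R) * a - 1) •
                (LocalizedModule.mk m t : LocalizedModule (e i).primeCompl M) = 0 := by
              apply mem_annOf.mp
              have he : (t : R) * a - 1 = -b := by rw [← hbc, hta]; ring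
              rw [he]
              exact neg_mem hbB
            rw [sub_smul, one_smul, sub_eq_zero] at h1
            have h3 : (LocalizedModule.mk m 1 : LocalizedModule (e i).primeCompl M)
                = (t : R) • LocalizedModule.mk m t := by
              rw [LocalizedModule.smul'_mk, ← Submonoid.smul_def, LocalizedModule.mk_cancel]
            rw [← LocalizedModule.smul'_mk, h3, ← mul_smul, mul_comm]
            exact h1
          · rw [DirectSum.of_eq_of_ne _ _ _ hi]
            by_cases hsi : s ∈ e i
            · have hmemT : e i ∈ T := Finset.mem_erase.mpr
                ⟨fun h => hi (hinj h), (Set.Finite.mem_toFinset _).mpr ⟨hmax i, hsi⟩⟩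
              have hmem := haA (e i) hmemT
              rw [hAdef] at hmem
              simp only [dif_pos (hmax i)] at hmem
              rw [← LocalizedModule.smul'_mk]
              exact mem_annOf.mp hmem
            · exact (lm_mk_eq_zero_iff _ _).mpr ⟨⟨s, hsi⟩, by rw [smul_comm, hsm, smul_zero]⟩
  exact ⟨LinearEquiv.ofBijective θ ⟨hθinj, hθsurj⟩⟩

end SHLocalMain

section SHLocalBack

variable {R : Type} [CommRing R]

private lemma quot_smul {I : Ideal R} (r x : R) :
    r • (Ideal.Quotient.mk I x) = Ideal.Quotient.mk I (r * x) := by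
  rw [Algebra.smul_def, Ideal.Quotient.algebraMap_eq, ← map_mul]

private lemma backward {S : Submonoid R}
    (ι : Type) (e : ι → Ideal R) (hmax : ∀ i, (e i).IsMaximal)
    (hcov : ∀ 𝔪 : Ideal R, 𝔪.IsMaximal → (∃ s ∈ S, s ∈ 𝔪) → ∃ i, e i = 𝔪)
    (H : ∀ (M : Type) [AddCommGroup M] [Module R M], IsSTorsion R S M →
      Nonempty (M ≃ₗ[R] DirectSum ι (fun i =>
        haveI := (hmax i).isPrime; LocalizedModule (e i).primeCompl M))) :
    IsSHLocal R S := by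
  classical
  letI : ∀ i, (e i).IsPrime := fun i => (hmax i).isPrime
  constructor
  · intro s hsS
    have hTor : IsSTorsion R S (R ⧸ Ideal.span {s}) := by
      intro x
      obtain ⟨r, rfl⟩ := Ideal.Quotient.mk_surjective x
      refine ⟨s, hsS, ?_⟩
      rw [quot_smul, Ideal.Quotient.eq_zero_iff_mem]
      exact Ideal.mul_mem_right r _ (Ideal.subset_span rfl)
    obtain ⟨φ⟩ := H _ hTor
    set z := φ 1 with hz
    have hsupp : ∀ i : ι,
        (∃ ξ : LocalizedModule (e i).primeCompl (R ⧸ Ideal.span {s}), ξ ≠ 0) →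
        i ∈ DFinsupp.support z := by
      rintro i ⟨ξ, hξ⟩
      by_contra hi
      obtain ⟨r, hr⟩ := Ideal.Quotient.mk_surjective (φ.symm (DirectSum.of _ i ξ))
      have hone : r • (1 : R ⧸ Ideal.span {s}) = Ideal.Quotient.mk _ r := by
        rw [← map_one (Ideal.Quotient.mk (Ideal.span {s})), quot_smul, mul_one]
      have h1 : DirectSum.of _ i ξ = r • z := by
        rw [hz, ← map_smul φ r 1, hone, hr, φ.apply_symm_apply]
      apply hξ
      have h2 := congrArg (fun w => w i) h1
      simp only [DirectSum.of_eq_same] at h2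
      rw [h2, DFinsupp.smul_apply, DFinsupp.notMem_support_iff.mp hi, smul_zero]
    have hsub : {𝔪 : Ideal R | 𝔪.IsMaximal ∧ s ∈ 𝔪} ⊆ e '' ↑(DFinsupp.support z) := by
      rintro 𝔪 ⟨h1, h2⟩
      obtain ⟨i, rfl⟩ := hcov 𝔪 h1 ⟨s, hsS, h2⟩
      refine ⟨i, hsupp i ⟨LocalizedModule.mk (Ideal.Quotient.mk _ 1) 1, ?_⟩, rfl⟩
      intro h0
      obtain ⟨u, hu⟩ := (lm_mk_eq_zero_iff _ _).mp h0
      rw [quot_smul, mul_one, Ideal.Quotient.eq_zero_iff_mem] at hu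
      exact u.2 (Ideal.span_le.mpr (Set.singleton_subset_iff.mpr h2) hu)
    exact ((DFinsupp.support z).finite_toSet.image e).subset hsub
  · rintro 𝔭 h𝔭 ⟨s, hsS, hs𝔭⟩ 𝔪 𝔫 h𝔪 h𝔫 h𝔭𝔪 h𝔭𝔫
    by_contra hne
    have hTor : IsSTorsion R S (R ⧸ 𝔭) := by
      intro x
      obtain ⟨r, rfl⟩ := Ideal.Quotient.mk_surjective x
      exact ⟨s, hsS, by
        rw [quot_smul, Ideal.Quotient.eq_zero_iff_mem]
        exact Ideal.mul_mem_right r _ hs𝔭⟩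
    obtain ⟨φ⟩ := H _ hTor
    obtain ⟨i, hi⟩ := hcov 𝔪 h𝔪 ⟨s, hsS, h𝔭𝔪 hs𝔭⟩
    obtain ⟨j, hj⟩ := hcov 𝔫 h𝔫 ⟨s, hsS, h𝔭𝔫 hs𝔭⟩
    have hij : i ≠ j := by
      intro h
      apply hne
      rw [← hi, ← hj, h]
    have key0 : ∀ k : ι, 𝔭 ≤ e k → ∀ r : R,
        (LocalizedModule.mk (Ideal.Quotient.mk 𝔭 r) 1 :
          LocalizedModule (e k).primeCompl (R ⧸ 𝔭)) = 0 → r ∈ 𝔭 := by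
      intro k hk r h0
      obtain ⟨u, hu⟩ := (lm_mk_eq_zero_iff _ _).mp h0
      rw [quot_smul, Ideal.Quotient.eq_zero_iff_mem] at hu
      rcases h𝔭.mem_or_mem hu with h | h
      · exact absurd (hk h) u.2
      · exact h
    have h𝔭i : 𝔭 ≤ e i := by rw [hi]; exact h𝔭𝔪
    have h𝔭j : 𝔭 ≤ e j := by rw [hj]; exact h𝔭𝔫
    set a : LocalizedModule (e i).primeCompl (R ⧸ 𝔭) :=
      LocalizedModule.mk (Ideal.Quotient.mk 𝔭 1) 1 with hadef
    set b : LocalizedModule (e j).primeCompl (R ⧸ 𝔭) :=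
      LocalizedModule.mk (Ideal.Quotient.mk 𝔭 1) 1 with hbdef
    obtain ⟨r, hr⟩ := Ideal.Quotient.mk_surjective (φ.symm (DirectSum.of _ i a))
    obtain ⟨t, ht⟩ := Ideal.Quotient.mk_surjective (φ.symm (DirectSum.of _ j b))
    have hrel : t • φ.symm (DirectSum.of _ i a) = r • φ.symm (DirectSum.of _ j b) := by
      rw [← hr, ← ht, quot_smul, quot_smul, mul_comm]
    have hrel2 : t • DirectSum.of (fun k : ι => LocalizedModule (e k).primeCompl (R ⧸ 𝔭)) i a
        = r • DirectSum.of (fun k : ι => LocalizedModule (e k).primeCompl (R ⧸ 𝔭)) j b := by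
      have hc := congrArg φ hrel
      rwa [map_smul, map_smul, φ.apply_symm_apply, φ.apply_symm_apply] at hc
    have hta : t • a = 0 := by
      rw [← DirectSum.of_smul, ← DirectSum.of_smul] at hrel2
      have hc := congrArg (fun w => w i) hrel2
      simpa only [DirectSum.of_eq_same, DirectSum.of_eq_of_ne _ _ _ hij] using hc
    have ht𝔭 : t ∈ 𝔭 := by
      apply key0 i h𝔭i t
      rw [← hta, hadef, LocalizedModule.smul'_mk, quot_smul, mul_one]
    have hb0 : φ.symm (DirectSum.of _ j b) = 0 := by
      rw [← ht, Ideal.Quotient.eq_zero_iff_mem]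
      exact ht𝔭
    have hof : DirectSum.of (fun k : ι => LocalizedModule (e k).primeCompl (R ⧸ 𝔭)) j b = 0 := by
      have hc := congrArg φ hb0
      rwa [φ.apply_symm_apply, map_zero] at hc
    have hbz : b = 0 := by
      have hc := congrArg (fun w => w j) hof
      simpa only [DirectSum.of_eq_same, DirectSum.zero_apply] using hc
    have h1𝔭 : (1 : R) ∈ 𝔭 := key0 j h𝔭j 1 hbz
    exact h𝔭.ne_top ((Ideal.eq_top_iff_one 𝔭).mpr h1𝔭)

end SHLocalBack


/-- `R` is `S`-h-local iff every `S`-torsion module is the direct sum of its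
localizations at all maximal ideals, iff every `S`-torsion module is the direct sum
of its localizations at the maximal ideals meeting `S`. -/
theorem isSHLocal_tfae (R : Type) [CommRing R] (S : Submonoid R) :
    [ IsSHLocal R S,
      ∀ (M : Type) [AddCommGroup M] [Module R M], IsSTorsion R S M →
        Nonempty (M ≃ₗ[R] DirectSum {𝔪 : Ideal R // 𝔪.IsMaximal}
          (fun 𝔪 => haveI := 𝔪.2.isPrime; LocalizedModule 𝔪.1.primeCompl M)),
      ∀ (M : Type) [AddCommGroup M] [Module R M], IsSTorsion R S M →
        Nonempty (M ≃ₗ[R] DirectSum {𝔪 : Ideal R // 𝔪.IsMaximal ∧ ∃ s ∈ S, s ∈ 𝔪}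
          (fun 𝔪 => haveI := 𝔪.2.1.isPrime; LocalizedModule 𝔪.1.primeCompl M)) ].TFAE := by
  tfae_have 1 → 2
  | h => by
    intro M _ _ hM
    exact forward h {𝔪 : Ideal R // 𝔪.IsMaximal} (fun 𝔪 => 𝔪.1) (fun 𝔪 => 𝔪.2)
      Subtype.val_injective (fun 𝔪 h𝔪 _ => ⟨⟨𝔪, h𝔪⟩, rfl⟩) M hM
  tfae_have 1 → 3
  | h => by
    intro M _ _ hM
    exact forward h {𝔪 : Ideal R // 𝔪.IsMaximal ∧ ∃ s ∈ S, s ∈ 𝔪} (fun 𝔪 => 𝔪.1)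
      (fun 𝔪 => 𝔪.2.1) Subtype.val_injective (fun 𝔪 h𝔪 hm => ⟨⟨𝔪, h𝔪, hm⟩, rfl⟩) M hM
  tfae_have 2 → 1
  | h => by
    exact backward {𝔪 : Ideal R // 𝔪.IsMaximal} (fun 𝔪 => 𝔪.1) (fun 𝔪 => 𝔪.2)
      (fun 𝔪 h𝔪 _ => ⟨⟨𝔪, h𝔪⟩, rfl⟩) h
  tfae_have 3 → 1
  | h => by
    exact backward {𝔪 : Ideal R // 𝔪.IsMaximal ∧ ∃ s ∈ S, s ∈ 𝔪} (fun 𝔪 => 𝔪.1)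
      (fun 𝔪 => 𝔪.2.1) (fun 𝔪 h𝔪 hm => ⟨⟨𝔪, h𝔪, hm⟩, rfl⟩) h
  tfae_finish
end
end

section
/- Let R be a commutative ring and S ⊆ R a multiplicative subset. Then: (1) if N is an S-torsion R-module, then for every R-module X the R-module Hom_R(N, X) is an S-contramodule; (2) if Q is an S-contramodule R-module, then for every R-module Y the R-module Hom_R(Y, Q) is an S-contramodule. -/
open CategoryTheory

noncomputable section

section AuxProofs
open TensorProduct

private lemma tensor_comm_swap {R M N P Q : Type} [CommRing R]
    [AddCommMonoid M] [Module R M] [AddCommMonoid N] [Module R N]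
    [AddCommMonoid P] [Module R P] [AddCommMonoid Q] [Module R Q]
    (f : M →ₗ[R] P) (g : N →ₗ[R] Q) (x : M ⊗[R] N) :
    LinearMap.lTensor P g (LinearMap.rTensor N f x)
      = LinearMap.rTensor Q f (LinearMap.lTensor M g x) := by
  rw [← LinearMap.comp_apply, ← LinearMap.comp_apply,
    LinearMap.lTensor_comp_rTensor, LinearMap.rTensor_comp_lTensor]

theorem aux_rTensor_inj {R A B C N : Type} [CommRing R]
    [AddCommGroup A] [Module R A] [AddCommGroup B] [Module R B]
    [AddCommGroup C] [Module R C] [AddCommGroup N] [Module R N]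
    [Module.Flat R C] (ι : A →ₗ[R] B) (p : B →ₗ[R] C)
    (hι : Function.Injective ι) (hp : Function.Surjective p)
    (hex : Function.Exact ι p) :
    Function.Injective (LinearMap.rTensor N ι) := by
  -- a two-step free presentation  F₂ → F₁ → F₀ → N → 0
  obtain ⟨F₀, _, _, π₀, F₁, _, _, d₁, F₂, _, _, d₂, hF₀, hF₁, hF₂, hπ₀, hex₁, hex₂⟩ :
      ∃ (F₀ : Type) (_ : AddCommGroup F₀) (_ : Module R F₀) (π₀ : F₀ →ₗ[R] N)
        (F₁ : Type) (_ : AddCommGroup F₁) (_ : Module R F₁) (d₁ : F₁ →ₗ[R] F₀)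
        (F₂ : Type) (_ : AddCommGroup F₂) (_ : Module R F₂) (d₂ : F₂ →ₗ[R] F₁),
        Module.Flat R F₀ ∧ Module.Flat R F₁ ∧ Module.Flat R F₂ ∧
        Function.Surjective π₀ ∧ Function.Exact d₁ π₀ ∧ Function.Exact d₂ d₁ := by
    refine ⟨N →₀ R, inferInstance, inferInstance, Finsupp.linearCombination R _root_.id,
      ?_⟩
    set π₀ : (N →₀ R) →ₗ[R] N := Finsupp.linearCombination R _root_.id
    set K : Submodule R (N →₀ R) := LinearMap.ker π₀
    refine ⟨↥K →₀ R, inferInstance, inferInstance,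
      K.subtype ∘ₗ Finsupp.linearCombination R _root_.id, ?_⟩
    set d₁ : (↥K →₀ R) →ₗ[R] (N →₀ R) := K.subtype ∘ₗ Finsupp.linearCombination R _root_.id
    set K' : Submodule R (↥K →₀ R) := LinearMap.ker d₁
    refine ⟨↥K' →₀ R, inferInstance, inferInstance,
      K'.subtype ∘ₗ Finsupp.linearCombination R _root_.id,
      inferInstance, inferInstance, inferInstance,
      Finsupp.linearCombination_id_surjective R N, ?_, ?_⟩
    · rw [LinearMap.exact_iff, LinearMap.range_comp,
        LinearMap.range_eq_top.2 (Finsupp.linearCombination_id_surjective R ↥K),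
        Submodule.map_top, Submodule.range_subtype]
    · rw [LinearMap.exact_iff, LinearMap.range_comp,
        LinearMap.range_eq_top.2 (Finsupp.linearCombination_id_surjective R ↥K'),
        Submodule.map_top, Submodule.range_subtype]
  have hπ₀d : π₀ ∘ₗ d₁ = 0 := hex₁.linearMap_comp_eq_zero
  have hd₁d₂ : d₁ ∘ₗ d₂ = 0 := hex₂.linearMap_comp_eq_zero
  have hpι : p ∘ₗ ι = 0 := hex.linearMap_comp_eq_zero
  -- now the diagram chase
  rw [← LinearMap.ker_eq_bot, eq_bot_iff]
  intro x hx
  rw [LinearMap.mem_ker] at hx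
  obtain ⟨xt, hxt⟩ := LinearMap.lTensor_surjective A hπ₀ x
  have hb : LinearMap.lTensor B π₀ (LinearMap.rTensor F₀ ι xt) = 0 := by
    rw [tensor_comm_swap ι π₀ xt, hxt, hx]
  obtain ⟨y, hy⟩ := (lTensor_exact B hex₁ hπ₀ _).mp hb
  have hc₁ : LinearMap.lTensor C d₁ (LinearMap.rTensor F₁ p y) = 0 := by
    rw [tensor_comm_swap p d₁ y, hy, ← LinearMap.comp_apply, ← LinearMap.rTensor_comp,
      hpι, LinearMap.rTensor_zero, LinearMap.zero_apply]
  have hCex : Function.Exact (LinearMap.lTensor C d₂) (LinearMap.lTensor C d₁) :=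
    Module.Flat.lTensor_exact C hex₂
  obtain ⟨z, hz⟩ := (hCex _).mp hc₁
  obtain ⟨w, hw⟩ := LinearMap.rTensor_surjective F₂ hp z
  have hy'p : LinearMap.rTensor F₁ p (y - LinearMap.lTensor B d₂ w) = 0 := by
    rw [map_sub, ← tensor_comm_swap p d₂ w, hw, hz, sub_self]
  have hFex : Function.Exact (LinearMap.rTensor F₁ ι) (LinearMap.rTensor F₁ p) :=
    Module.Flat.rTensor_exact F₁ hex
  obtain ⟨a₁, ha₁⟩ := (hFex _).mp hy'p
  have hdy' : LinearMap.lTensor B d₁ (y - LinearMap.lTensor B d₂ w)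
      = LinearMap.rTensor F₀ ι xt := by
    rw [map_sub, hy, ← LinearMap.comp_apply, ← LinearMap.lTensor_comp, hd₁d₂,
      LinearMap.lTensor_zero, LinearMap.zero_apply, sub_zero]
  have hxt_eq : xt = LinearMap.lTensor A d₁ a₁ := by
    apply Module.Flat.rTensor_preserves_injective_linearMap (M := F₀) ι hι
    rw [← tensor_comm_swap ι d₁ a₁, ha₁, hdy']
  have : x = 0 := by
    rw [← hxt, hxt_eq, ← LinearMap.comp_apply, ← LinearMap.lTensor_comp, hπ₀d,
      LinearMap.lTensor_zero, LinearMap.zero_apply]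
  simp [this]


lemma aux_factor {R A B C : Type} [CommRing R] [AddCommGroup A] [Module R A]
    [AddCommGroup B] [Module R B] [AddCommGroup C] [Module R C]
    (φ : A →ₗ[R] B) (hφ : Function.Surjective φ) (ψ : A →ₗ[R] C)
    (h : LinearMap.ker φ ≤ LinearMap.ker ψ) :
    ∃ χ : B →ₗ[R] C, χ ∘ₗ φ = ψ := by
  refine ⟨(Submodule.liftQ _ ψ h) ∘ₗ
    (LinearMap.quotKerEquivOfSurjective φ hφ).symm.toLinearMap, ?_⟩
  ext a
  have h2 : (LinearMap.quotKerEquivOfSurjective φ hφ).symm (φ a)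
      = Submodule.Quotient.mk a := by
    rw [LinearEquiv.symm_apply_eq]
    rfl
  simp [h2]

lemma aux_torsion_tensor_zero {R : Type} [CommRing R] (S : Submonoid R) {N : Type}
    [AddCommGroup N] [Module R N] (hN : ∀ x : N, ∃ s ∈ S, s • x = 0)
    (x : Localization S ⊗[R] N) : x = 0 := by
  induction x using TensorProduct.induction_on with
  | zero => rfl
  | add a b ha hb => rw [ha, hb, add_zero]
  | tmul l n =>
    obtain ⟨t, htS, htn⟩ := hN n
    induction l using Localization.induction_on with
    | H rs =>
      obtain ⟨r, s⟩ := rs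
      have h1 : Localization.mk r s = t • Localization.mk r (s * ⟨t, htS⟩) := by
        rw [Localization.smul_mk, Localization.mk_eq_mk_iff, Localization.r_iff_exists]
        exact ⟨1, by push_cast [smul_eq_mul]; ring⟩
      rw [h1, TensorProduct.smul_tmul, htn, TensorProduct.tmul_zero]


lemma moduleCat_subsingleton_iff_isZero {R : Type} [Ring R] (M : ModuleCat R) :
    Subsingleton M ↔ Limits.IsZero M := by
  constructor
  · intro h
    exact ModuleCat.isZero_of_subsingleton M
  · intro h
    have hid : 𝟙 M = 0 := h.eq_of_src _ _
    refine ⟨fun a b => ?_⟩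
    calc a = (𝟙 M : M ⟶ M) a := rfl
    _ = (0 : M ⟶ M) a := by rw [hid]
    _ = (𝟙 M : M ⟶ M) b := by rw [hid]; rfl
    _ = b := rfl

lemma extVanishes_one_iff {R : Type} [CommRing R] {Z M : Type}
    [AddCommGroup Z] [Module R Z] [AddCommGroup M] [Module R M]
    (P : ProjectiveResolution (ModuleCat.of R Z)) :
    ExtVanishes R Z M 1 ↔
      ∀ f : P.complex.X 1 ⟶ ModuleCat.of R M,
        P.complex.d 2 1 ≫ f = 0 →
          ∃ g : P.complex.X 0 ⟶ ModuleCat.of R M, P.complex.d 1 0 ≫ g = f := by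
  have h1 : ExtVanishes R Z M 1 ↔ Limits.IsZero
      ((P.complex.linearYonedaObj R (ModuleCat.of R M)).homology 1) := by
    rw [show ExtVanishes R Z M 1 ↔ Subsingleton (((Ext R (ModuleCat R) 1).obj
      (Opposite.op (ModuleCat.of R Z))).obj (ModuleCat.of R M)) from Iff.rfl,
      moduleCat_subsingleton_iff_isZero]
    exact ⟨fun h => h.of_iso (P.isoExt 1 (ModuleCat.of R M)).symm,
      fun h => h.of_iso (P.isoExt 1 (ModuleCat.of R M))⟩
  rw [h1, ← HomologicalComplex.exactAt_iff_isZero_homology,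
    HomologicalComplex.exactAt_iff' _ 0 1 2 (by simp) (by simp),
    ShortComplex.moduleCat_exact_iff]
  constructor
  · intro h f hf
    obtain ⟨g, hg⟩ := h f (by
      exact hf)
    exact ⟨g, by exact hg⟩
  · intro h f hf
    obtain ⟨g, hg⟩ := h f (by
      exact hf)
    exact ⟨g, by exact hg⟩

end AuxProofs

/-- (1) If `N` is an `S`-torsion `R`-module, then `Hom_R(N, X)` is an `S`-contramodule
for every `R`-module `X`; (2) if `Q` is an `S`-contramodule, then `Hom_R(Y, Q)` is an
`S`-contramodule for every `R`-module `Y`. -/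
theorem hom_isSContramodule (R : Type) [CommRing R] (S : Submonoid R) :
    (∀ (N : Type) [AddCommGroup N] [Module R N], IsSTorsion R S N →
      ∀ (X : Type) [AddCommGroup X] [Module R X],
        IsSContramodule R S (N →ₗ[R] X)) ∧
    (∀ (Q : Type) [AddCommGroup Q] [Module R Q], IsSContramodule R S Q →
      ∀ (Y : Type) [AddCommGroup Y] [Module R Y],
        IsSContramodule R S (Y →ₗ[R] Q)) := by
  obtain ⟨P⟩ := (inferInstance :
    HasProjectiveResolution (ModuleCat.of R (Localization S))).out
  -- the first differential, the second differential and the augmentation map,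
  -- as plain linear maps
  let d1 : (P.complex.X 1 : Type) →ₗ[R] (P.complex.X 0 : Type) := (P.complex.d 1 0).hom
  let d2 : (P.complex.X 2 : Type) →ₗ[R] (P.complex.X 1 : Type) := (P.complex.d 2 1).hom
  let e : ((ChainComplex.single₀ (ModuleCat R)).obj (ModuleCat.of R (Localization S))).X 0 ≅
      ModuleCat.of R (Localization S) :=
    HomologicalComplex.singleObjXSelf (ComplexShape.down ℕ) 0 (ModuleCat.of R (Localization S))
  let π₀ : (P.complex.X 0 : Type) →ₗ[R] Localization S := (P.π.f 0 ≫ e.hom : _ ⟶ _).hom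
  have hsur : Function.Surjective π₀ := by
    have h1 : Epi (P.π.f 0 ≫ e.hom) := epi_comp _ _
    exact (ModuleCat.epi_iff_surjective _).mp h1
  have hexd1 : Function.Exact d1 π₀ := by
    rw [LinearMap.exact_iff]
    have h0 := (ShortComplex.moduleCat_exact_iff_range_eq_ker _).mp P.exact₀
    have he : Function.Injective e.hom :=
      (ModuleCat.mono_iff_injective e.hom).mp inferInstance
    have hk : LinearMap.ker π₀
        = LinearMap.ker ((P.π.f 0).hom : (P.complex.X 0 : Type) →ₗ[R] _) := by
      show LinearMap.ker (LinearMap.comp (e.hom.hom : _ →ₗ[R] _) (P.π.f 0).hom) = _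
      rw [LinearMap.ker_comp, LinearMap.ker_eq_bot.mpr he, Submodule.comap_bot]
    rw [hk]
    exact h0.symm
  have hexd2 : Function.Exact d2 d1 := by
    rw [LinearMap.exact_iff]
    exact ((ShortComplex.moduleCat_exact_iff_range_eq_ker _).mp (P.exact_succ 0)).symm
  constructor
  · -- Part (1): N is S-torsion
    intro N _ _ hN X _ _
    have hNt : ∀ x : N, ∃ s ∈ S, s • x = 0 := hN
    constructor
    · intro f
      apply LinearMap.ext; intro l
      apply LinearMap.ext; intro n
      simp only [LinearMap.zero_apply]
      have h0 : (l ⊗ₜ[R] n : TensorProduct R (Localization S) N) = 0 :=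
        aux_torsion_tensor_zero S hNt _
      have h1 : f l n = TensorProduct.lift f (l ⊗ₜ[R] n) := rfl
      rw [h1, h0, map_zero]
    · rw [extVanishes_one_iff P]
      intro f hf
      let F : (P.complex.X 1 : Type) →ₗ[R] (N →ₗ[R] X) := f.hom
      have hfd2 : F ∘ₗ d2 = 0 := congrArg ModuleCat.Hom.hom hf
      set K0 : Submodule R (P.complex.X 0 : Type) := LinearMap.ker π₀ with hK0
      have hd1K0 : ∀ p, d1 p ∈ K0 := fun p =>
        LinearMap.mem_ker.mpr (hexd1.apply_apply_eq_zero p)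
      set q : (P.complex.X 1 : Type) →ₗ[R] ↥K0 := d1.codRestrict K0 hd1K0 with hq
      have hd1_eq : K0.subtype ∘ₗ q = d1 := LinearMap.subtype_comp_codRestrict _ _ _
      have hq_surj : Function.Surjective q := by
        intro k
        obtain ⟨p, hp⟩ := (hexd1 k.1).mp (LinearMap.mem_ker.mp k.2)
        refine ⟨p, Subtype.ext ?_⟩
        rw [← hp]
        rfl
      have hexd2q : Function.Exact d2 q := by
        rw [LinearMap.exact_iff, hq, LinearMap.ker_codRestrict]
        exact LinearMap.exact_iff.mp hexd2
      have hexι : Function.Exact (K0.subtype : ↥K0 →ₗ[R] _) π₀ := by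
        rw [LinearMap.exact_iff, Submodule.range_subtype, hK0]
      have hι_inj : Function.Injective (LinearMap.rTensor N K0.subtype) :=
        aux_rTensor_inj K0.subtype π₀ K0.injective_subtype hsur hexι
      have hι_surj : Function.Surjective (LinearMap.rTensor N K0.subtype) := by
        intro x
        exact ((rTensor_exact N hexι hsur) x).mp (aux_torsion_tensor_zero S hNt _)
      have hcomp : LinearMap.rTensor N d1
          = (LinearMap.rTensor N K0.subtype) ∘ₗ (LinearMap.rTensor N q) := by
        rw [← LinearMap.rTensor_comp, hd1_eq]
      have hd1t_surj : Function.Surjective (LinearMap.rTensor N d1) := by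
        rw [hcomp]
        exact hι_surj.comp (LinearMap.rTensor_surjective N hq_surj)
      set ft : (TensorProduct R (P.complex.X 1 : Type) N) →ₗ[R] X :=
        TensorProduct.lift F with hft
      have hftd2 : ft ∘ₗ LinearMap.rTensor N d2 = 0 := by
        apply TensorProduct.ext'
        intro p n
        have h2 : ft ((d2 p) ⊗ₜ[R] n) = F (d2 p) n := rfl
        have h3 : F (d2 p) = 0 := by
          have := LinearMap.congr_fun hfd2 p
          simpa using this
        simp [LinearMap.rTensor_tmul, h2, h3]
      have hker : LinearMap.ker (LinearMap.rTensor N d1) ≤ LinearMap.ker ft := by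
        intro x hx
        rw [LinearMap.mem_ker] at hx ⊢
        rw [hcomp, LinearMap.comp_apply] at hx
        have hqx : LinearMap.rTensor N q x = 0 := hι_inj (by simpa using hx)
        obtain ⟨z, hz⟩ := ((rTensor_exact N hexd2q hq_surj) x).mp hqx
        rw [← hz, ← LinearMap.comp_apply, hftd2, LinearMap.zero_apply]
      obtain ⟨gt, hgt⟩ := aux_factor _ hd1t_surj ft hker
      refine ⟨ModuleCat.ofHom (TensorProduct.curry gt), ?_⟩
      apply ModuleCat.hom_ext
      show (TensorProduct.curry gt) ∘ₗ d1 = F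
      apply LinearMap.ext; intro p
      apply LinearMap.ext; intro n
      have h1 : ((TensorProduct.curry gt) ∘ₗ d1) p n = gt ((d1 p) ⊗ₜ[R] n) := rfl
      have h2 : (d1 p) ⊗ₜ[R] n = LinearMap.rTensor N d1 (p ⊗ₜ[R] n) := rfl
      have h3 : F p n = ft (p ⊗ₜ[R] n) := rfl
      rw [h1, h2, ← LinearMap.comp_apply, hgt, h3]
  · -- Part (2): Q is an S-contramodule
    intro Q _ _ hQ Y _ _
    obtain ⟨hQ0, hQ1⟩ := hQ
    have hQlift := (extVanishes_one_iff P (M := Q)).mp hQ1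
    constructor
    · intro φ
      apply LinearMap.ext; intro l
      apply LinearMap.ext; intro y
      have h := hQ0 ((LinearMap.applyₗ y) ∘ₗ φ)
      have h2 := LinearMap.congr_fun h l
      simpa using h2
    · rw [extVanishes_one_iff P]
      intro f hf
      let F : (P.complex.X 1 : Type) →ₗ[R] (Y →ₗ[R] Q) := f.hom
      have hfd2 : F ∘ₗ d2 = 0 := congrArg ModuleCat.Hom.hom hf
      -- uniqueness of lifts against d1
      have uniq : ∀ g g' : (P.complex.X 0 : Type) →ₗ[R] Q,
          g ∘ₗ d1 = g' ∘ₗ d1 → g = g' := by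
        intro g g' hgg
        have hker : LinearMap.ker π₀ ≤ LinearMap.ker (g - g') := by
          intro a ha
          obtain ⟨b, hb⟩ := (hexd1 a).mp (LinearMap.mem_ker.mp ha)
          rw [LinearMap.mem_ker, ← hb]
          have := LinearMap.congr_fun hgg b
          simp only [LinearMap.comp_apply] at this
          simp [this]
        obtain ⟨χ, hχ⟩ := aux_factor π₀ hsur (g - g') hker
        have hz : χ = 0 := hQ0 χ
        have : g - g' = 0 := by rw [← hχ, hz, LinearMap.zero_comp]
        exact sub_eq_zero.mp this
      -- pointwise lifts
      have hlift : ∀ y : Y, ∃ g : (P.complex.X 0 : Type) →ₗ[R] Q,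
          g ∘ₗ d1 = (LinearMap.applyₗ y) ∘ₗ F := by
        intro y
        have hcoc : ((LinearMap.applyₗ y) ∘ₗ F) ∘ₗ d2 = 0 := by
          rw [LinearMap.comp_assoc, hfd2, LinearMap.comp_zero]
        obtain ⟨g, hg⟩ := hQlift (ModuleCat.ofHom ((LinearMap.applyₗ y) ∘ₗ F))
          (ModuleCat.hom_ext hcoc)
        exact ⟨g.hom, congrArg ModuleCat.Hom.hom hg⟩
      choose gs hgs using hlift
      have hadd : ∀ y y' : Y, gs (y + y') = gs y + gs y' := by
        intro y y'
        apply uniq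
        rw [hgs, LinearMap.add_comp, hgs, hgs]
        apply LinearMap.ext; intro p
        simp
      have hsmul : ∀ (r : R) (y : Y), gs (r • y) = r • gs y := by
        intro r y
        apply uniq
        rw [hgs, LinearMap.smul_comp, hgs]
        apply LinearMap.ext; intro p
        simp
      refine ⟨ModuleCat.ofHom (LinearMap.mk₂ R (fun p y => gs y p)
        (fun p p' y => map_add (gs y) p p')
        (fun c p y => map_smul (gs y) c p)
        (fun p y y' => by show gs (y + y') p = gs y p + gs y' p; rw [hadd]; rfl)
        (fun c p y => by show gs (c • y) p = c • gs y p; rw [hsmul]; rfl)), ?_⟩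
      apply ModuleCat.hom_ext
      show (LinearMap.mk₂ R (fun p y => gs y p)
        (fun p p' y => map_add (gs y) p p')
        (fun c p y => map_smul (gs y) c p)
        (fun p y y' => by show gs (y + y') p = gs y p + gs y' p; rw [hadd]; rfl)
        (fun c p y => by show gs (c • y) p = c • gs y p; rw [hsmul]; rfl)) ∘ₗ d1 = F
      apply LinearMap.ext; intro p
      apply LinearMap.ext; intro y
      have h1 := LinearMap.congr_fun (hgs y) p
      simp only [LinearMap.comp_apply] at h1 ⊢
      simpa [LinearMap.mk₂_apply] using h1
end
end
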